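/- Let θ₁,…,θ_k be odd (exterior) generators and consider the Koszul complex K = ℚ[x₁,…,x_n] ⊗ Λ[θ₁,…,θ_k] with differential d = Σᵢ pᵢ ∂/∂θᵢ for polynomials p₁,…,p_k. Suppose matrices A_m = (a_{m;ij}) with polynomial entries satisfy L_m(p⃗) = A_m p⃗ for all m, where L_m is a fixed family of derivations. Define ∇_m = L_m + Σ_{i,j} a_{m;ij} θ_j ∂/∂θᵢ. Then [d, ∇_m] = 0 for every m ≥ 0. -/
import Mathlib


open MvPolynomial

/-- The standard Witt operator `L_m = Σ_i x_i^{m+1} ∂/∂x_i` on `ℚ[x₁,…,x_n]`. -/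
noncomputable def wittL (n m : ℕ) (q : MvPolynomial (Fin n) ℚ) :
    MvPolynomial (Fin n) ℚ :=
  ∑ i : Fin n, X i ^ (m + 1) * pderiv i q

/-- The Koszul complex `K = ℚ[x₁,…,x_n] ⊗ Λ[θ₁,…,θ_k]`, modelled as functions
from subsets `S ⊆ {1,…,k}` (the coefficient of the monomial `θ_S`, variables in
increasing order) to polynomials.  The Koszul differential `d = Σᵢ pᵢ ∂/∂θᵢ`:
`(dω)_S = Σ_{i ∉ S} (-1)^{#{j ∈ S : j < i}} pᵢ ω_{S ∪ {i}}`. -/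
noncomputable def koszulD (n k : ℕ) (p : Fin k → MvPolynomial (Fin n) ℚ)
    (ω : Finset (Fin k) → MvPolynomial (Fin n) ℚ) :
    Finset (Fin k) → MvPolynomial (Fin n) ℚ :=
  fun S => ∑ i : Fin k,
    if i ∈ S then 0
    else (-1 : MvPolynomial (Fin n) ℚ) ^ ((S.filter (fun j => j < i)).card) *
      p i * ω (insert i S)

/-- The operator `∇_m = L_m + Σ_{i,j} a_{ij} θ_j ∂/∂θᵢ` on the Koszul complex,
where `L_m` acts coefficient-wise (trivially on the `θ`'s), and
`θ_j ∂/∂θᵢ` is computed with the usual Koszul signs. -/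
noncomputable def koszulNabla (n k m : ℕ)
    (a : Fin k → Fin k → MvPolynomial (Fin n) ℚ)
    (ω : Finset (Fin k) → MvPolynomial (Fin n) ℚ) :
    Finset (Fin k) → MvPolynomial (Fin n) ℚ :=
  fun S => wittL n m (ω S) +
    ∑ i : Fin k, ∑ j : Fin k,
      if j ∈ S ∧ (i = j ∨ i ∉ S) then
        (-1 : MvPolynomial (Fin n) ℚ) ^
            (((S.erase j).filter (fun l => l < i)).card +
              ((S.erase j).filter (fun l => l < j)).card) *
          a i j * ω (insert i (S.erase j))
      else 0


namespace KAux

variable {A : Type*} [CommRing A] {k : ℕ}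

def ec (S : Finset (Fin k)) (r : Fin k) : ℕ := (S.filter (fun l => l < r)).card

lemma ec_def (S : Finset (Fin k)) (r : Fin k) :
    (S.filter (fun l => l < r)).card = ec S r := rfl

lemma ec_insert {S : Finset (Fin k)} {i : Fin k} (h : i ∉ S) (r : Fin k) :
    ec (insert i S) r = ec S r + if i < r then 1 else 0 := by
  unfold ec
  rw [Finset.filter_insert]
  split_ifs with h1
  · rw [Finset.card_insert_of_notMem (fun hm => h (Finset.mem_of_mem_filter _ hm))]
  · simp

lemma ec_erase {S : Finset (Fin k)} {j : Fin k} (h : j ∈ S) (r : Fin k) :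
    ec S r = ec (S.erase j) r + if j < r then 1 else 0 := by
  conv_lhs => rw [← Finset.insert_erase h]
  exact ec_insert (Finset.notMem_erase _ _) r

lemma npc {x y : ℕ} (h : x % 2 = y % 2) : ((-1 : A)) ^ x = (-1) ^ y := by
  rcases Nat.even_or_odd x with hx | hx
  · have hy : Even y := by rw [Nat.even_iff] at hx ⊢; omega
    rw [hx.neg_one_pow, hy.neg_one_pow]
  · have hy : Odd y := by rw [Nat.odd_iff] at hx ⊢; omega
    rw [hx.neg_one_pow, hy.neg_one_pow]

lemma sg_mul_self (x : ℕ) : (-1 : A) ^ x * (-1) ^ x = 1 := by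
  rw [← pow_add]; exact Even.neg_one_pow ⟨x, by ring⟩

variable (S : Finset (Fin k)) (p : Fin k → A) (a : Fin k → Fin k → A)
  (ω : Finset (Fin k) → A)

/-- piece from `j' = i` on the LHS -/
def FA (i i' j' : Fin k) : A :=
  if j' = i ∧ i ∉ S ∧ i' ∉ S then
    (-1) ^ ec S i' * a i' i * p i * ω (insert i' S) else 0

/-- diagonal piece `i' = j' ∈ S` on the LHS -/
def FBd (i i' j' : Fin k) : A :=
  if i' = j' ∧ i ∉ S ∧ j' ∈ S then
    (-1) ^ ec S i * a j' j' * p i * ω (insert i S) else 0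

/-- generic piece on the LHS -/
def FX (i i' j' : Fin k) : A :=
  if i ∉ S ∧ j' ∈ S ∧ i' ∉ S ∧ i' ≠ i then
    (-1) ^ (ec S i + ec (insert i (S.erase j')) i' + ec (insert i (S.erase j')) j') *
      a i' j' * p i * ω (insert i' (insert i (S.erase j'))) else 0

def GTout (i j : Fin k) : A :=
  if i ∉ S ∧ j ∉ S then (-1) ^ ec S i * a i j * p j * ω (insert i S) else 0

def GTin (i j : Fin k) : A :=
  if i ∉ S ∧ j ∈ S then (-1) ^ ec S i * a i j * p j * ω (insert i S) else 0

def GD (i' j' r : Fin k) : A :=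
  if i' = j' ∧ j' ∈ S ∧ r ∉ S then
    (-1) ^ ec S r * a j' j' * p r * ω (insert r S) else 0

def GTin' (i' j' r : Fin k) : A :=
  if r = j' ∧ j' ∈ S ∧ i' ∉ S then
    -((-1) ^ ec S i' * a i' j' * p j' * ω (insert i' S)) else 0

def GX (i' j' r : Fin k) : A :=
  if j' ∈ S ∧ i' ∉ S ∧ r ∉ S ∧ r ≠ i' then
    (-1) ^ (ec (S.erase j') i' + ec (S.erase j') j' + ec (insert i' (S.erase j')) r) *
      a i' j' * p r * ω (insert r (insert i' (S.erase j'))) else 0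

lemma decompL :
    (∑ i : Fin k, if i ∈ S then 0 else (-1 : A) ^ ec S i * p i *
      (∑ i' : Fin k, ∑ j' : Fin k,
        if j' ∈ insert i S ∧ (i' = j' ∨ i' ∉ insert i S) then
          (-1 : A) ^ (ec ((insert i S).erase j') i' + ec ((insert i S).erase j') j') *
            a i' j' * ω (insert i' ((insert i S).erase j'))
        else 0))
    = ∑ i : Fin k, ∑ i' : Fin k, ∑ j' : Fin k,
        (FA S p a ω i i' j' + FBd S p a ω i i' j' + FX S p a ω i i' j') := by
  refine Finset.sum_congr rfl fun i _ => ?_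
  by_cases hi : i ∈ S
  · simp [hi, FA, FBd, FX]
  · rw [if_neg hi, Finset.mul_sum]
    refine Finset.sum_congr rfl fun i' _ => ?_
    rw [Finset.mul_sum]
    refine Finset.sum_congr rfl fun j' _ => ?_
    by_cases hj : j' = i
    · subst hj
      by_cases hi' : i' ∈ S
      · have hne : i' ≠ j' := fun h => hi (h ▸ hi')
        rw [if_neg (fun h => h.2.elim (fun e => hne e)
              (fun hn => hn (Finset.mem_insert_of_mem hi')))]
        rw [FA, if_neg (fun h => h.2.2 hi'), FBd, if_neg (fun h => hne h.1),
          FX, if_neg (fun h => h.2.2.1 hi')]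
        ring
      · have hc : j' ∈ insert j' S ∧ (i' = j' ∨ i' ∉ insert j' S) := by
          refine ⟨Finset.mem_insert_self _ _, ?_⟩
          by_cases h : i' = j'
          · exact Or.inl h
          · exact Or.inr (by simp [Finset.mem_insert, h, hi'])
        rw [if_pos hc, FA, if_pos ⟨rfl, hi, hi'⟩, FBd, if_neg (fun h => hi h.2.2),
          FX, if_neg (fun h => hi h.2.1), Finset.erase_insert hi, pow_add]
        linear_combination ((-1 : A) ^ ec S i' * a i' j' * p j' * ω (insert i' S)) *
          sg_mul_self (A := A) (ec S j')
    · by_cases hjS : j' ∈ S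
      · by_cases hii' : i' = j'
        · subst hii'
          have hm : i' ∈ insert i S := Finset.mem_insert_of_mem hjS
          rw [if_pos ⟨hm, Or.inl rfl⟩, FA, if_neg (fun h => hj h.1),
            FBd, if_pos ⟨rfl, hi, hjS⟩, FX, if_neg (fun h => h.2.2.1 hjS),
            Finset.insert_erase hm, pow_add]
          linear_combination ((-1 : A) ^ ec S i * p i * a i' i' * ω (insert i S)) *
            sg_mul_self (A := A) (ec ((insert i S).erase i') i')
        · by_cases hi'm : i' ∈ insert i S
          · rw [if_neg (fun h => h.2.elim hii' (fun hn => hn hi'm)),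
              FA, if_neg (fun h => hj h.1), FBd, if_neg (fun h => hii' h.1),
              FX, if_neg (fun h => (Finset.mem_insert.mp hi'm).elim
                (fun e => h.2.2.2 e) (fun hs => h.2.2.1 hs))]
            ring
          · have hi'S : i' ∉ S := fun h => hi'm (Finset.mem_insert_of_mem h)
            have hi'i : i' ≠ i := fun h => hi'm (h ▸ Finset.mem_insert_self _ _)
            rw [if_pos ⟨Finset.mem_insert_of_mem hjS, Or.inr hi'm⟩,
              FA, if_neg (fun h => hj h.1), FBd, if_neg (fun h => hii' h.1),
              FX, if_pos ⟨hi, hjS, hi'S, hi'i⟩,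
              Finset.erase_insert_of_ne (fun e => hj e.symm), pow_add, pow_add]
            ring
      · rw [if_neg (fun h => (Finset.mem_insert.mp h.1).elim hj hjS),
          FA, if_neg (fun h => hj h.1), FBd, if_neg (fun h => hjS h.2.2),
          FX, if_neg (fun h => hjS h.2.1)]
        ring


lemma decompR :
    ((∑ i : Fin k, if i ∈ S then 0 else
        (-1 : A) ^ ec S i * ((∑ j : Fin k, a i j * p j) * ω (insert i S)))
      + ∑ i' : Fin k, ∑ j' : Fin k,
        if j' ∈ S ∧ (i' = j' ∨ i' ∉ S) then
          (-1 : A) ^ (ec (S.erase j') i' + ec (S.erase j') j') * a i' j' *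
            (∑ r : Fin k, if r ∈ insert i' (S.erase j') then 0 else
              (-1 : A) ^ ec (insert i' (S.erase j')) r * p r *
                ω (insert r (insert i' (S.erase j'))))
        else 0)
    = (∑ i : Fin k, ∑ j : Fin k, (GTout S p a ω i j + GTin S p a ω i j))
      + ∑ i' : Fin k, ∑ j' : Fin k, ∑ r : Fin k,
          (GD S p a ω i' j' r + GTin' S p a ω i' j' r + GX S p a ω i' j' r) := by
  congr 1
  · refine Finset.sum_congr rfl fun i _ => ?_
    by_cases hi : i ∈ S
    · simp [hi, GTout, GTin]
    · rw [if_neg hi, Finset.sum_mul, Finset.mul_sum]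
      refine Finset.sum_congr rfl fun j _ => ?_
      by_cases hjS : j ∈ S
      · rw [GTout, if_neg (fun h => h.2 hjS), GTin, if_pos ⟨hi, hjS⟩]; ring
      · rw [GTout, if_pos ⟨hi, hjS⟩, GTin, if_neg (fun h => hjS h.2)]; ring
  · refine Finset.sum_congr rfl fun i' _ => Finset.sum_congr rfl fun j' _ => ?_
    by_cases hc : j' ∈ S ∧ (i' = j' ∨ i' ∉ S)
    · obtain ⟨hjS, hd⟩ := hc
      rw [if_pos ⟨hjS, hd⟩, Finset.mul_sum]
      refine Finset.sum_congr rfl fun r _ => ?_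
      by_cases hii' : i' = j'
      · subst hii'
        rw [Finset.insert_erase hjS]
        have hi'S : i' ∈ S := hjS
        by_cases hr : r ∈ S
        · rw [if_pos hr, GD, if_neg (fun h => h.2.2 hr),
            GTin', if_neg (fun h => h.2.2 hjS),
            GX, if_neg (fun h => h.2.1 hi'S)]
          ring
        · rw [if_neg hr, GD, if_pos ⟨rfl, hjS, hr⟩,
            GTin', if_neg (fun h => h.2.2 hi'S),
            GX, if_neg (fun h => h.2.1 hi'S), pow_add]
          linear_combination ((-1 : A) ^ ec S r * a i' i' * p r * ω (insert r S)) *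
            sg_mul_self (A := A) (ec (S.erase i') i')
      · have hi'S : i' ∉ S := hd.resolve_left hii'
        have hi'E : i' ∉ S.erase j' := fun h => hi'S (Finset.mem_of_mem_erase h)
        by_cases hr1 : r = i'
        · subst hr1
          rw [if_pos (Finset.mem_insert_self _ _), GD, if_neg (fun h => hii' h.1),
            GTin', if_neg (fun h => hii' h.1),
            GX, if_neg (fun h => h.2.2.2 rfl)]
          ring
        · by_cases hr2 : r = j'
          · subst hr2
            have hrm : r ∉ insert i' (S.erase r) := by
              intro h
              rcases Finset.mem_insert.mp h with h | h
              · exact hr1 h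
              · exact (Finset.notMem_erase _ _) h
            rw [if_neg hrm, GD, if_neg (fun h => hii' h.1),
              GTin', if_pos ⟨rfl, hjS, hi'S⟩, GX, if_neg (fun h => h.2.2.1 hjS),
              Finset.insert_comm, Finset.insert_erase hjS]
            have f1 : ec (insert i' (S.erase r)) r = ec (S.erase r) r + ite (i' < r) 1 0 :=
              ec_insert hi'E r
            have f2 : ec S i' = ec (S.erase r) i' + ite (r < i') 1 0 := ec_erase hjS i'
            have hX : (ec (S.erase r) i' + ec (S.erase r) r + ec (insert i' (S.erase r)) r) % 2
                = (ec S i' + 1) % 2 := by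
              rw [f1, f2]
              rcases lt_or_gt_of_ne hii' with h | h
              · rw [if_pos h, if_neg (asymm h)]; omega
              · rw [if_neg (asymm h), if_pos h]; omega
            have hs : (-1 : A) ^ (ec (S.erase r) i' + ec (S.erase r) r) *
                (-1) ^ ec (insert i' (S.erase r)) r = -(-1) ^ ec S i' := by
              rw [← pow_add, npc hX, pow_succ, mul_neg_one]
            linear_combination (a i' r * p r * ω (insert i' S)) * hs
          · by_cases hrS : r ∈ S
            · have hrm : r ∈ insert i' (S.erase j') :=
                Finset.mem_insert_of_mem (Finset.mem_erase.mpr ⟨hr2, hrS⟩)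
              rw [if_pos hrm, GD, if_neg (fun h => hii' h.1),
                GTin', if_neg (fun h => hr2 h.1), GX, if_neg (fun h => h.2.2.1 hrS)]
              ring
            · have hrm : r ∉ insert i' (S.erase j') := by
                intro h
                rcases Finset.mem_insert.mp h with h | h
                · exact hr1 h
                · exact hrS (Finset.mem_of_mem_erase h)
              rw [if_neg hrm, GD, if_neg (fun h => hii' h.1),
                GTin', if_neg (fun h => hr2 h.1), GX, if_pos ⟨hjS, hi'S, hrS, hr1⟩,
                pow_add, pow_add]
              ring
    · rw [if_neg hc]
      have h1 : ∀ r : Fin k, GD S p a ω i' j' r = 0 := fun r => by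
        rw [GD, if_neg (fun h => hc ⟨h.2.1, Or.inl h.1⟩)]
      have h2 : ∀ r : Fin k, GTin' S p a ω i' j' r = 0 := fun r => by
        rw [GTin', if_neg (fun h => hc ⟨h.2.1, Or.inr h.2.2⟩)]
      have h3 : ∀ r : Fin k, GX S p a ω i' j' r = 0 := fun r => by
        rw [GX, if_neg (fun h => hc ⟨h.1, Or.inr h.2.1⟩)]
      simp [h1, h2, h3]


lemma M1 : (∑ i : Fin k, ∑ i' : Fin k, ∑ j' : Fin k, FA S p a ω i i' j')
    = ∑ i : Fin k, ∑ j : Fin k, GTout S p a ω i j := by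
  rw [Finset.sum_comm]
  refine Finset.sum_congr rfl fun i' _ => Finset.sum_congr rfl fun i _ => ?_
  simp only [FA, ite_and, Finset.sum_ite_eq', Finset.mem_univ, if_true, GTout]
  split_ifs <;> first | rfl | tauto

lemma M2 : (∑ i : Fin k, ∑ i' : Fin k, ∑ j' : Fin k, FBd S p a ω i i' j')
    = ∑ i' : Fin k, ∑ j' : Fin k, ∑ r : Fin k, GD S p a ω i' j' r := by
  have hR : ∀ i' : Fin k, (∑ j' : Fin k, ∑ r : Fin k, GD S p a ω i' j' r)
      = ∑ r : Fin k, if i' ∈ S ∧ r ∉ S then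
          (-1 : A) ^ ec S r * a i' i' * p r * ω (insert r S) else 0 := by
    intro i'
    rw [Finset.sum_comm]
    refine Finset.sum_congr rfl fun r _ => ?_
    simp only [GD, ite_and, Finset.sum_ite_eq, Finset.mem_univ, if_true]
  simp only [hR]
  rw [Finset.sum_comm]
  refine Finset.sum_congr rfl fun i' _ => Finset.sum_congr rfl fun i _ => ?_
  simp only [FBd, ite_and, Finset.sum_ite_eq, Finset.mem_univ, if_true]
  split_ifs <;> first | rfl | tauto

lemma M3 : (∑ i : Fin k, ∑ j : Fin k, GTin S p a ω i j)
    + (∑ i' : Fin k, ∑ j' : Fin k, ∑ r : Fin k, GTin' S p a ω i' j' r) = 0 := by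
  simp only [GTin', ite_and, Finset.sum_ite_eq', Finset.mem_univ, if_true]
  rw [← Finset.sum_add_distrib]
  refine Finset.sum_eq_zero fun i _ => ?_
  rw [← Finset.sum_add_distrib]
  refine Finset.sum_eq_zero fun j _ => ?_
  rw [GTin]
  by_cases hj : j ∈ S
  · by_cases hi : i ∈ S
    · rw [if_neg (fun h => h.1 hi), if_pos hj, if_neg (fun h => h hi)]; ring
    · rw [if_pos ⟨hi, hj⟩, if_pos hj, if_pos hi]; ring
  · rw [if_neg (fun h => hj h.2), if_neg hj]; ring

lemma M4 : (∑ i : Fin k, ∑ i' : Fin k, ∑ j' : Fin k, FX S p a ω i i' j')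
    = ∑ i' : Fin k, ∑ j' : Fin k, ∑ r : Fin k, GX S p a ω i' j' r := by
  rw [Finset.sum_comm]
  refine Finset.sum_congr rfl fun i' _ => ?_
  rw [Finset.sum_comm]
  refine Finset.sum_congr rfl fun j' _ => Finset.sum_congr rfl fun i _ => ?_
  rw [FX, GX]
  by_cases hc : i ∉ S ∧ j' ∈ S ∧ i' ∉ S ∧ i' ≠ i
  · obtain ⟨hi, hjS, hi'S, hne⟩ := hc
    rw [if_pos ⟨hi, hjS, hi'S, hne⟩, if_pos ⟨hjS, hi'S, hi, fun e => hne e.symm⟩]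
    have hiE : i ∉ S.erase j' := fun h => hi (Finset.mem_of_mem_erase h)
    have hi'E : i' ∉ S.erase j' := fun h => hi'S (Finset.mem_of_mem_erase h)
    have f1 : ec (insert i (S.erase j')) i' = ec (S.erase j') i' + ite (i < i') 1 0 :=
      ec_insert hiE i'
    have f2 : ec (insert i (S.erase j')) j' = ec (S.erase j') j' + ite (i < j') 1 0 :=
      ec_insert hiE j'
    have f3 : ec S i = ec (S.erase j') i + ite (j' < i) 1 0 := ec_erase hjS i
    have f4 : ec (insert i' (S.erase j')) i = ec (S.erase j') i + ite (i' < i) 1 0 :=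
      ec_insert hi'E i
    have hij : i ≠ j' := fun e => hi (e ▸ hjS)
    have hX : (ec S i + ec (insert i (S.erase j')) i' + ec (insert i (S.erase j')) j') % 2
        = (ec (S.erase j') i' + ec (S.erase j') j' + ec (insert i' (S.erase j')) i) % 2 := by
      rw [f1, f2, f3, f4]
      rcases lt_or_gt_of_ne hij with h1 | h1 <;> rcases lt_or_gt_of_ne hne with h2 | h2
      · rw [if_pos h1, if_neg (asymm h1), if_pos h2, if_neg (asymm h2)]; omega
      · rw [if_pos h1, if_neg (asymm h1), if_neg (asymm h2), if_pos h2]; omega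
      · rw [if_neg (asymm h1), if_pos h1, if_pos h2, if_neg (asymm h2)]; omega
      · rw [if_neg (asymm h1), if_pos h1, if_neg (asymm h2), if_pos h2]; omega
    rw [npc hX, Finset.insert_comm]
  · rw [if_neg hc, if_neg (fun h => hc ⟨h.2.2.1, h.1, h.2.1, fun e => h.2.2.2 e.symm⟩)]

lemma key :
    (∑ i : Fin k, if i ∈ S then 0 else (-1 : A) ^ ec S i * p i *
      (∑ i' : Fin k, ∑ j' : Fin k,
        if j' ∈ insert i S ∧ (i' = j' ∨ i' ∉ insert i S) then
          (-1 : A) ^ (ec ((insert i S).erase j') i' + ec ((insert i S).erase j') j') *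
            a i' j' * ω (insert i' ((insert i S).erase j'))
        else 0))
    = (∑ i : Fin k, if i ∈ S then 0 else
        (-1 : A) ^ ec S i * ((∑ j : Fin k, a i j * p j) * ω (insert i S)))
      + ∑ i' : Fin k, ∑ j' : Fin k,
        if j' ∈ S ∧ (i' = j' ∨ i' ∉ S) then
          (-1 : A) ^ (ec (S.erase j') i' + ec (S.erase j') j') * a i' j' *
            (∑ r : Fin k, if r ∈ insert i' (S.erase j') then 0 else
              (-1 : A) ^ ec (insert i' (S.erase j')) r * p r *
                ω (insert r (insert i' (S.erase j'))))
        else 0 := by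
  rw [decompL, decompR]
  simp only [Finset.sum_add_distrib]
  rw [M1, M2, M4]
  linear_combination -(M3 S p a ω)


end KAux

section WittLemmas

open MvPolynomial KAux

lemma wittL_zero (n m : ℕ) : wittL n m 0 = 0 := by simp [wittL]

lemma wittL_sum {ι : Type*} (n m : ℕ) (s : Finset ι) (f : ι → MvPolynomial (Fin n) ℚ) :
    wittL n m (∑ j ∈ s, f j) = ∑ j ∈ s, wittL n m (f j) := by
  simp only [wittL, map_sum, Finset.mul_sum]
  exact Finset.sum_comm

lemma wittL_mul (n m : ℕ) (q r : MvPolynomial (Fin n) ℚ) :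
    wittL n m (q * r) = q * wittL n m r + wittL n m q * r := by
  simp only [wittL, pderiv_mul, Finset.mul_sum, Finset.sum_mul, ← Finset.sum_add_distrib]
  exact Finset.sum_congr rfl fun i _ => by ring

lemma wittL_neg (n m : ℕ) (q : MvPolynomial (Fin n) ℚ) :
    wittL n m (-q) = - wittL n m q := by
  simp [wittL, Finset.sum_neg_distrib]

lemma wittL_sgmul (n m c : ℕ) (q : MvPolynomial (Fin n) ℚ) :
    wittL n m ((-1) ^ c * q) = (-1) ^ c * wittL n m q := by
  rcases Nat.even_or_odd c with h | h
  · rw [h.neg_one_pow, one_mul, one_mul]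
  · rw [h.neg_one_pow, neg_one_mul, neg_one_mul, wittL_neg]

end WittLemmas

/-- If `L_m(pᵢ) = Σ_j a_{m;ij} p_j` for all `m, i`, then the Koszul
differential `d` commutes with each `∇_m`:  `[d, ∇_m] = 0`. -/
theorem koszulD_nabla_comm (n k : ℕ) (p : Fin k → MvPolynomial (Fin n) ℚ)
    (a : ℕ → Fin k → Fin k → MvPolynomial (Fin n) ℚ)
    (ha : ∀ (m : ℕ) (i : Fin k), wittL n m (p i) = ∑ j : Fin k, a m i j * p j)
    (m : ℕ) (ω : Finset (Fin k) → MvPolynomial (Fin n) ℚ) :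
    koszulD n k p (koszulNabla n k m (a m) ω) =
      koszulNabla n k m (a m) (koszulD n k p ω) := by
  funext S
  simp only [koszulD, koszulNabla, KAux.ec_def]
  have hL : (∑ i : Fin k, if i ∈ S then 0 else
        (-1 : MvPolynomial (Fin n) ℚ) ^ KAux.ec S i * p i *
        (wittL n m (ω (insert i S)) +
          ∑ i' : Fin k, ∑ j' : Fin k,
            if j' ∈ insert i S ∧ (i' = j' ∨ i' ∉ insert i S) then
              (-1 : MvPolynomial (Fin n) ℚ) ^
                  (KAux.ec ((insert i S).erase j') i' + KAux.ec ((insert i S).erase j') j') *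
                a m i' j' * ω (insert i' ((insert i S).erase j'))
            else 0))
      = (∑ i : Fin k, if i ∈ S then 0 else
          (-1 : MvPolynomial (Fin n) ℚ) ^ KAux.ec S i * p i * wittL n m (ω (insert i S)))
        + ∑ i : Fin k, if i ∈ S then 0 else
            (-1 : MvPolynomial (Fin n) ℚ) ^ KAux.ec S i * p i *
            (∑ i' : Fin k, ∑ j' : Fin k,
              if j' ∈ insert i S ∧ (i' = j' ∨ i' ∉ insert i S) then
                (-1 : MvPolynomial (Fin n) ℚ) ^
                    (KAux.ec ((insert i S).erase j') i' + KAux.ec ((insert i S).erase j') j') *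
                  a m i' j' * ω (insert i' ((insert i S).erase j'))
              else 0) := by
    rw [← Finset.sum_add_distrib]
    refine Finset.sum_congr rfl fun i _ => ?_
    split_ifs with h
    · simp
    · ring
  have hR1 : wittL n m (∑ i : Fin k, if i ∈ S then 0 else
        (-1 : MvPolynomial (Fin n) ℚ) ^ KAux.ec S i * p i * ω (insert i S))
      = (∑ i : Fin k, if i ∈ S then 0 else
          (-1 : MvPolynomial (Fin n) ℚ) ^ KAux.ec S i * p i * wittL n m (ω (insert i S)))
        + ∑ i : Fin k, if i ∈ S then 0 else
            (-1 : MvPolynomial (Fin n) ℚ) ^ KAux.ec S i *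
              ((∑ j : Fin k, a m i j * p j) * ω (insert i S)) := by
    rw [wittL_sum, ← Finset.sum_add_distrib]
    refine Finset.sum_congr rfl fun i _ => ?_
    split_ifs with h
    · simp [wittL_zero]
    · rw [mul_assoc, wittL_sgmul, wittL_mul, ha]
      ring
  rw [hL, hR1, KAux.key S p (a m) ω]
  ring
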